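/- arXiv:2001.01089 — 3 statements merged into one kernel-verified Lean document; each statement's English description precedes it below -/
import Mathlib

section
/- Every answer set of a ground disjunctive logic program Π is a minimal model of Π: if M and N are both answer sets of Π and N ⊆ M, then N = M. -/
structure Rule (A : Type) where
  head : Set A
  pbody : Set A
  nbody : Set A

def modelsRule {A : Type} (M : Set A) (r : Rule A) : Prop :=
  (r.pbody ⊆ M ∧ r.nbody ∩ M = ∅) → (r.head ∩ M).Nonempty

def modelsProg {A : Type} (M : Set A) (R : Set (Rule A)) : Prop :=
  ∀ r ∈ R, modelsRule M r

def glReduct {A : Type} (R : Set (Rule A)) (M : Set A) : Set (Rule A) :=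
  { r' | ∃ r ∈ R, r.nbody ∩ M = ∅ ∧ r' = ⟨r.head, r.pbody, ∅⟩ }

/-- `M` is an answer set: `M` models `Π` and no proper subset of `M`
models the GL-reduct `Π^M`. -/
def answerSet {A : Type} (R : Set (Rule A)) (M : Set A) : Prop :=
  modelsProg M R ∧ ¬ ∃ N, N ⊂ M ∧ modelsProg N (glReduct R M)

/-- A rule of `Π^M` comes from a rule of `Π` whose negative body misses `M`, hence also `N`. -/
theorem modelsProg_glReduct_of_subset {A : Type} {R : Set (Rule A)} {M N : Set A}
    (hNM : N ⊆ M) (hN : modelsProg N R) : modelsProg N (glReduct R M) := by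
  rintro _ ⟨r, hr, hnM, rfl⟩ ⟨hpos, -⟩
  have hnN : r.nbody ∩ N = ∅ :=
    Set.subset_eq_empty (Set.inter_subset_inter_right _ hNM) hnM
  exact hN r hr ⟨hpos, hnN⟩

theorem answerSet.eq_of_subset_of_modelsProg {A : Type} {R : Set (Rule A)} {M N : Set A}
    (hM : answerSet R M) (hN : modelsProg N R) (hNM : N ⊆ M) : N = M := by
  by_contra hne
  exact hM.2 ⟨N, hNM.ssubset_of_ne hne, modelsProg_glReduct_of_subset hNM hN⟩

/-- answer sets are minimal models: if `M` and `N` are both answer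
sets of `Π` and `N ⊆ M`, then `N = M`. -/
theorem answerSets_antichain
    (A : Type) (R : Set (Rule A)) (M N : Set A)
    (hM : answerSet R M) (hN : answerSet R N) (hNM : N ⊆ M) :
    N = M :=
  hM.eq_of_subset_of_modelsProg hN.1 hNM
end

section
/- The chain-based proper-subset gadget is correct: for Boolean vectors x, y ∈ {0,1}^n, the conjunction leq(y_i, x_i) for all i (where leq holds for pairs (0,0), (0,1), (1,1)) together with the existence of values N_0 = 0, N_n = 1, and or(N_{i-1}, x_i − y_i, N_i) for all i (where or(a,b,c) holds iff c = a ∨ b under the Boolean interpretation) is satisfiable if and only if the set {i : y_i = 1} is a proper subset of {i : x_i = 1}. -/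
/-!
The chain is forced: by induction, `N k` is the disjunction of the first `k` values
`xᵢ && !yᵢ`, so `N n = 1` says exactly that some `i` has `xᵢ = 1` and `yᵢ = 0`.
Together with `y ≤ x` pointwise, i.e. `{y = 1} ⊆ {x = 1}`, this is strict inclusion.
-/

namespace Fin

variable {n : ℕ} (b : Fin n → Bool)

def prefixOr (k : Fin (n + 1)) : Bool :=
  decide (∃ i : Fin n, i.castSucc < k ∧ b i = true)

@[simp]
theorem prefixOr_zero : prefixOr b 0 = false := by
  simp [prefixOr]

theorem prefixOr_succ (j : Fin n) :
    prefixOr b j.succ = (prefixOr b j.castSucc || b j) := by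
  simp only [prefixOr, castSucc_lt_succ_iff, castSucc_lt_castSucc_iff, Bool.decide_or,
    le_iff_lt_or_eq, or_and_right, exists_or, exists_eq_left, Bool.decide_eq_true]

theorem prefixOr_last : prefixOr b (last n) = true ↔ ∃ i, b i = true := by
  simp [prefixOr, castSucc_lt_last]

variable {b}

theorem eq_prefixOr_of_chain {N : Fin (n + 1) → Bool} (h0 : N 0 = false)
    (hstep : ∀ i : Fin n, N i.succ = (N i.castSucc || b i)) : N = prefixOr b := by
  funext k
  induction k using Fin.induction with
  | zero => rw [h0, prefixOr_zero]
  | succ j ih => rw [hstep, prefixOr_succ, ih]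

variable (b)

theorem exists_or_chain_iff :
    (∃ N : Fin (n + 1) → Bool, N 0 = false ∧ N (last n) = true ∧
      ∀ i : Fin n, N i.succ = (N i.castSucc || b i)) ↔ ∃ i, b i = true := by
  refine ⟨?_, fun h => ⟨prefixOr b, prefixOr_zero b, (prefixOr_last b).2 h, prefixOr_succ b⟩⟩
  rintro ⟨N, h0, hlast, hstep⟩
  rwa [eq_prefixOr_of_chain h0 hstep, prefixOr_last] at hlast

end Fin

theorem Bool.setOf_ssubset_setOf_iff {ι : Type*} (x y : ι → Bool) :
    {i | y i = true} ⊂ {i | x i = true} ↔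
      (∀ i, y i ≤ x i) ∧ ∃ i, (x i && !y i) = true := by
  have hsub : {i | y i = true} ⊆ {i | x i = true} ↔ ∀ i, y i ≤ x i := by
    simp only [Set.ofPred_subset_ofPred, Bool.le_iff_imp]
  rw [ssubset_iff_subset_not_subset, hsub, Set.not_subset]
  simp

theorem chain_proper_subset_gadget_general
    (n : ℕ) (x y : Fin n → Bool) :
    ((∀ i : Fin n, y i ≤ x i) ∧
      ∃ N : Fin (n + 1) → Bool,
        N 0 = false ∧ N (Fin.last n) = true ∧
        ∀ i : Fin n, N i.succ = (N i.castSucc || (x i && !y i))) ↔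
    ({i : Fin n | y i = true} ⊂ {i : Fin n | x i = true}) := by
  rw [Fin.exists_or_chain_iff, Bool.setOf_ssubset_setOf_iff]

/-- correctness of the chain-based proper-subset gadget. For
Boolean vectors x, y ∈ {0,1}ⁿ (n ≥ 1): the conjunction of `y i ≤ x i` for all i
together with the existence of a chain N₀ = 0, Nₙ = 1 with
Nᵢ = N_{i-1} ∨ (xᵢ − yᵢ) is satisfiable iff {i : yᵢ = 1} ⊊ {i : xᵢ = 1}.
(Booleans encode 0/1; given yᵢ ≤ xᵢ, the value xᵢ − yᵢ is `x i && !y i`.) -/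
theorem chain_proper_subset_gadget
    (n : ℕ) (hn : 1 ≤ n) (x y : Fin n → Bool) :
    ((∀ i : Fin n, y i ≤ x i) ∧
      ∃ N : Fin (n + 1) → Bool,
        N 0 = false ∧ N (Fin.last n) = true ∧
        ∀ i : Fin n, N i.succ = (N i.castSucc || (x i && !y i))) ↔
    ({i : Fin n | y i = true} ⊂ {i : Fin n | x i = true}) :=
  chain_proper_subset_gadget_general n x y
end

section
/- Grid lower bound for the chain interleaving: the graph obtained from the n × n grid graph by taking the union of n horizontal paths (rows) connected end-to-end into one chain and n vertical paths (columns) connected end-to-end into another chain contains the n × n grid as a subgraph, and hence has treewidth at least n. -/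
/-- A tree decomposition of a graph `G` with bag-index (node) type `T`. -/
structure TreeDecomp {V : Type} (G : SimpleGraph V) (T : Type) where
  tree : SimpleGraph T
  isTree : tree.IsTree
  bag : T → Set V
  vertexCover : ∀ v : V, ∃ t : T, v ∈ bag t
  edgeCover : ∀ ⦃u v : V⦄, G.Adj u v → ∃ t : T, u ∈ bag t ∧ v ∈ bag t
  pathCond : ∀ (r s t : T) (p : tree.Walk r t), p.IsPath → s ∈ p.support →
      bag r ∩ bag t ⊆ bag s

/-- `G` admits a tree decomposition of width at most `w`. -/
def hasTDWidthLE {V : Type} (G : SimpleGraph V) (w : ℕ) : Prop :=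
  ∃ (T : Type) (td : TreeDecomp G T), ∀ t : T, (td.bag t).encard ≤ w + 1

/-- Horizontal edges of the grid on `Fin n × Fin n` (rows). -/
def horizE (n : ℕ) : Set (Sym2 (Fin n × Fin n)) :=
  {e | ∃ i j k : Fin n, (k : ℕ) = (j : ℕ) + 1 ∧ e = s((i, j), (i, k))}

/-- Vertical edges of the grid (columns). -/
def vertE (n : ℕ) : Set (Sym2 (Fin n × Fin n)) :=
  {e | ∃ i j k : Fin n, (k : ℕ) = (j : ℕ) + 1 ∧ e = s((j, i), (k, i))}

/-- The n × n grid graph. -/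
def gridGraph (n : ℕ) : SimpleGraph (Fin n × Fin n) :=
  SimpleGraph.fromEdgeSet (horizE n ∪ vertE n)

/-- Connector edges of the "black" chain: the right end of row i is joined to
the right end of row i+1 when i is even, and the left ends are joined when i
is odd, so that the rows form one single chain. -/
def rowConnE (n : ℕ) : Set (Sym2 (Fin (n + 1) × Fin (n + 1))) :=
  {e | ∃ i i' : Fin (n + 1), (i' : ℕ) = (i : ℕ) + 1 ∧
        (((i : ℕ) % 2 = 0 ∧ e = s((i, Fin.last n), (i', Fin.last n))) ∨
         ((i : ℕ) % 2 = 1 ∧ e = s((i, 0), (i', 0))))}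

/-- Connector edges of the "pink" chain, linking the columns into one chain. -/
def colConnE (n : ℕ) : Set (Sym2 (Fin (n + 1) × Fin (n + 1))) :=
  {e | ∃ i i' : Fin (n + 1), (i' : ℕ) = (i : ℕ) + 1 ∧
        (((i : ℕ) % 2 = 0 ∧ e = s((Fin.last n, i), (Fin.last n, i'))) ∨
         ((i : ℕ) % 2 = 1 ∧ e = s((0, i), (0, i'))))}

/-- The union of the horizontal chain and the vertical chain. -/
def chainUnion (n : ℕ) : SimpleGraph (Fin (n + 1) × Fin (n + 1)) :=
  SimpleGraph.fromEdgeSet (horizE (n + 1) ∪ rowConnE n ∪ vertE (n + 1) ∪ colConnE n)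

def TreeDecomp.ofLE {V T : Type} {G H : SimpleGraph V} (hGH : G ≤ H) (td : TreeDecomp H T) :
    TreeDecomp G T where
  tree := td.tree
  isTree := td.isTree
  bag := td.bag
  vertexCover := td.vertexCover
  edgeCover _ _ h := td.edgeCover (hGH h)
  pathCond := td.pathCond

theorem hasTDWidthLE.anti {V : Type} {G H : SimpleGraph V} (hGH : G ≤ H) {w : ℕ}
    (hH : hasTDWidthLE H w) : hasTDWidthLE G w :=
  let ⟨T, td, hbag⟩ := hH
  ⟨T, td.ofLE hGH, hbag⟩

theorem gridGraph_le_chainUnion (n : ℕ) : gridGraph (n + 1) ≤ chainUnion n :=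
  SimpleGraph.fromEdgeSet_mono fun _ he => he.elim
    (fun h => Or.inl (Or.inl (Or.inl h))) (fun h => Or.inl (Or.inr h))

/-- the union of the two interleaved chains contains the grid as
a subgraph, hence (using the classical fact that the (n+1) × (n+1) grid has
treewidth n+1, taken as hypothesis) it has treewidth at least n+1. -/
theorem chainUnion_contains_grid_and_treewidth
    (n : ℕ)
    (hgrid : ∀ w : ℕ, hasTDWidthLE (gridGraph (n + 1)) w → n + 1 ≤ w) :
    gridGraph (n + 1) ≤ chainUnion n ∧
    (∀ w : ℕ, hasTDWidthLE (chainUnion n) w → n + 1 ≤ w) :=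
  ⟨gridGraph_le_chainUnion n,
    fun w hw => hgrid w (hw.anti (gridGraph_le_chainUnion n))⟩
end
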